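/- Let k ≥ 1 be an integer, q = (2k−1)/2, and η ∈ (0,1). There exist constants a > 0, c₁ > 0 and c₂ ∈ ℝ, depending only on k and η, such that: for every R > 0 there exist ρ₀ > 0 and n₀ ≥ 1 with the following property. Let 0 < ρ < ρ₀ (in particular ρ^{1/q} < R), set ε = arcsin( ρ^{1/q}/R ) and x₀ = −a·ρ^{−1/(2k−1)}, and let ξ : ℝ → ℂ be any function satisfying: ξ(x) = x − iη·arctan( x·(1+x²)^{−1/4} ) for x ≥ x₀; ξ(x) = x for x ≤ x₀ − η; and on [x₀−η, x₀], Re ξ(x) = x with x ↦ Im ξ(x) monotone. Then the potential V_ρ(x) = e^{i( π/2 − ε(2k−1)/(2k+1) )}·ξ(x)² + iρ·ξ(x)^{2k+1} satisfies Re V_ρ(x) ≥ c₁/R + c₂ for every x ∈ ℝ with |x| ≥ n₀. -/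

import Mathlib

/-!
Write `ξ(x) = u + iv` and `θ = ε(2k-1)/(2k+1)`, so that
`Re V_ρ = sin θ (u² - v²) - 2 cos θ uv - ρ Im ξ^{2k+1}`, and `uv ≤ 0` everywhere.
For `x > 0` the argument of `conj ξ(x)` is below `π/(2k+1)`, so `Im ξ^{2k+1} ≤ 0`.
On `(x₀ - η, 0)` we have `|x| ≤ 2|x₀|`, hence
`ρ |Im ξ^{2k+1}| ≲ ρ (2|x₀|)^{2k-1} |uv| = (2a)^{2k-1} |uv|`, which `2 cos θ |uv|` absorbs once
`a` is small. What remains is `η|x|/2` where the distortion is switched on (`|v| ≥ ηπ/4`), and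
`sin θ x₀²/2 ≳ (ρ^{1/q}/R) a² ρ^{-1/q} = a²/R` beyond the cut-off point (`|v| ≤ π/2`).
-/

open scoped Real
open Complex

namespace Complex

lemma abs_im_pow_succ_le (z : ℂ) (n : ℕ) :
    |(z ^ (n + 1)).im| ≤ (n + 1) * ‖z‖ ^ n * |z.im| := by
  induction n with
  | zero => simp
  | succ n ih =>
    calc |(z ^ (n + 1 + 1)).im|
        = |(z ^ (n + 1)).re * z.im + (z ^ (n + 1)).im * z.re| := by rw [pow_succ, mul_im]
      _ ≤ |(z ^ (n + 1)).re| * |z.im| + |(z ^ (n + 1)).im| * |z.re| := by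
          rw [← abs_mul, ← abs_mul]; exact abs_add_le _ _
      _ ≤ ‖z‖ ^ (n + 1) * |z.im| + (n + 1) * ‖z‖ ^ n * |z.im| * ‖z‖ := by
          gcongr
          · exact (abs_re_le_norm _).trans (norm_pow z _).le
          · exact abs_re_le_norm z
      _ = (↑(n + 1) + 1) * ‖z‖ ^ (n + 1) * |z.im| := by push_cast; ring

lemma abs_im_pow_two_mul_add_one_le {z : ℂ} (hz : |z.im| ≤ |z.re|) (k : ℕ) :
    |(z ^ (2 * k + 1)).im| ≤ (2 * k + 1) * 2 ^ k * |z.re| ^ (2 * k) * |z.im| := by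
  have hnorm : ‖z‖ ^ (2 * k) ≤ 2 ^ k * |z.re| ^ (2 * k) := by
    rw [pow_mul, pow_mul, ← mul_pow, Complex.sq_norm, normSq_apply]
    refine pow_le_pow_left₀ (add_nonneg (mul_self_nonneg _) (mul_self_nonneg _)) ?_ k
    nlinarith [sq_abs z.re, sq_abs z.im, mul_self_le_mul_self (abs_nonneg z.im) hz]
  calc |(z ^ (2 * k + 1)).im| ≤ (↑(2 * k) + 1) * ‖z‖ ^ (2 * k) * |z.im| := abs_im_pow_succ_le z _
    _ ≤ (2 * k + 1) * (2 ^ k * |z.re| ^ (2 * k)) * |z.im| := by push_cast; gcongr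
    _ = _ := by ring

lemma im_pow_nonneg {z : ℂ} (n : ℕ) (hre : 0 < z.re) (him : 0 ≤ z.im)
    (h : n * z.im ≤ π * z.re) : 0 ≤ (z ^ n).im := by
  have harg0 : 0 ≤ arg z := arg_nonneg_iff.2 him
  have harg : n * arg z ≤ π := by
    have hlt : arg z < π / 2 := arg_lt_pi_div_two_iff.2 (Or.inl hre)
    have htan : arg z ≤ z.im / z.re := (Real.le_tan harg0 hlt).trans_eq (tan_arg z)
    calc n * arg z ≤ n * (z.im / z.re) := by gcongr
      _ ≤ π := by rwa [← mul_div_assoc, div_le_iff₀ hre]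
  rw [← norm_mul_exp_arg_mul_I z, mul_pow, ← exp_nat_mul, ← ofReal_pow, im_ofReal_mul,
    ← mul_assoc, ← ofReal_natCast, ← ofReal_mul, exp_ofReal_mul_I_im]
  exact mul_nonneg (by positivity) (Real.sin_nonneg_of_nonneg_of_le_pi (by positivity) harg)

lemma im_pow_nonpos {z : ℂ} (n : ℕ) (hre : 0 < z.re) (him : z.im ≤ 0)
    (h : n * -z.im ≤ π * z.re) : (z ^ n).im ≤ 0 := by
  have := im_pow_nonneg n (z := starRingEnd ℂ z) hre (by simpa using him) (by simpa using h)
  rwa [← map_pow, conj_im, neg_nonneg] at this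

end Complex

lemma mul_abs_im_pow_le {k : ℕ} (hk : 1 ≤ k) {z : ℂ} {ρ M : ℝ} (hρ : 0 ≤ ρ)
    (hz : |z.im| ≤ |z.re|) (hM : |z.re| ≤ M)
    (hsmall : (2 * k + 1) * 2 ^ k * ρ * M ^ (2 * k - 1) ≤ 1 / 4) :
    ρ * |(z ^ (2 * k + 1)).im| ≤ |z.re * z.im| / 4 := by
  have hpow : |z.re| ^ (2 * k) = |z.re| ^ (2 * k - 1) * |z.re| := by
    rw [← pow_succ, Nat.sub_add_cancel (by omega)]
  have hpowM : |z.re| ^ (2 * k - 1) ≤ M ^ (2 * k - 1) := by gcongr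
  calc ρ * |(z ^ (2 * k + 1)).im|
      ≤ ρ * ((2 * k + 1) * 2 ^ k * |z.re| ^ (2 * k) * |z.im|) := by
        gcongr; exact Complex.abs_im_pow_two_mul_add_one_le hz k
    _ = (2 * k + 1) * 2 ^ k * ρ * |z.re| ^ (2 * k - 1) * (|z.re| * |z.im|) := by
        rw [hpow]; ring
    _ ≤ (2 * k + 1) * 2 ^ k * ρ * M ^ (2 * k - 1) * (|z.re| * |z.im|) := by gcongr
    _ ≤ 1 / 4 * (|z.re| * |z.im|) := by gcongr
    _ = |z.re * z.im| / 4 := by rw [abs_mul]; ring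

/-- The potential `V_ρ` at the point `z = ξ(x)`, where `θ = ε(2k-1)/(2k+1)` and `n = 2k+1`. -/
noncomputable def distortedPotential (θ ρ : ℝ) (n : ℕ) (z : ℂ) : ℂ :=
  exp (I * ((π / 2 - θ : ℝ) : ℂ)) * z ^ 2 + I * ρ * z ^ n

section distortedPotential

variable {θ ρ : ℝ} {n : ℕ} {z : ℂ}

lemma re_distortedPotential :
    (distortedPotential θ ρ n z).re =
      Real.sin θ * (z.re ^ 2 - z.im ^ 2) - Real.cos θ * (2 * z.re * z.im) - ρ * (z ^ n).im := by
  have hexp : exp (I * ((π / 2 - θ : ℝ) : ℂ)) = Real.sin θ + Real.cos θ * I := by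
    rw [mul_comm, exp_mul_I, ← ofReal_cos, ← ofReal_sin, Real.cos_pi_div_two_sub,
      Real.sin_pi_div_two_sub]
  simp only [distortedPotential, hexp, sq, add_re, mul_re, mul_im, add_im, I_re, I_im,
    ofReal_re, ofReal_im]
  ring

lemma le_re_distortedPotential_of_re_mul_im_nonpos (hcos : 1 / 2 ≤ Real.cos θ)
    (hsign : z.re * z.im ≤ 0) (hρ : ρ * (z ^ n).im ≤ |z.re * z.im| / 4) :
    Real.sin θ * (z.re ^ 2 - z.im ^ 2) + 3 / 4 * |z.re * z.im| ≤
      (distortedPotential θ ρ n z).re := by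
  rw [abs_of_nonpos hsign] at hρ ⊢
  rw [re_distortedPotential]
  nlinarith

lemma mul_abs_le_re_distortedPotential (hsin : 0 ≤ Real.sin θ) (hcos : 1 / 2 ≤ Real.cos θ)
    (hsign : z.re * z.im ≤ 0) (hρ : ρ * (z ^ n).im ≤ |z.re * z.im| / 4)
    {η : ℝ} (hη : 0 ≤ η) (hre : 2 ≤ |z.re|) (him : η * (π / 4) ≤ |z.im|)
    (him' : |z.im| ≤ π / 2) :
    η * |z.re| / 2 ≤ (distortedPotential θ ρ n z).re := by
  refine le_trans ?_ (le_re_distortedPotential_of_re_mul_im_nonpos hcos hsign hρ)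
  have hsq : z.im ^ 2 ≤ z.re ^ 2 := by
    rw [← sq_abs z.im, ← sq_abs z.re]; nlinarith [Real.pi_lt_four, abs_nonneg z.im]
  have hπ : η * |z.re| / 2 ≤ 3 / 4 * (|z.re| * (η * (π / 4))) := by
    nlinarith [mul_nonneg (mul_nonneg hη (abs_nonneg z.re)) (sub_nonneg.2 Real.pi_gt_three.le)]
  rw [abs_mul]
  nlinarith [mul_nonneg hsin (sub_nonneg.2 hsq), mul_le_mul_of_nonneg_left him (abs_nonneg z.re)]

lemma sin_mul_sq_div_two_le_re_distortedPotential (hsin : 0 ≤ Real.sin θ)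
    (hcos : 1 / 2 ≤ Real.cos θ) (hsign : z.re * z.im ≤ 0)
    (hρ : ρ * (z ^ n).im ≤ |z.re * z.im| / 4) {X : ℝ} (hre : X ^ 2 ≤ z.re ^ 2)
    (him : z.im ^ 2 ≤ X ^ 2 / 2) :
    Real.sin θ * X ^ 2 / 2 ≤ (distortedPotential θ ρ n z).re := by
  refine le_trans ?_ (le_re_distortedPotential_of_re_mul_im_nonpos hcos hsign hρ)
  nlinarith [abs_nonneg (z.re * z.im)]

end distortedPotential

noncomputable def distortionProfile (x : ℝ) : ℝ :=
  Real.arctan (x * (1 + x ^ 2) ^ (-(1 / 4 : ℝ)))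

lemma distortionProfile_neg (x : ℝ) : distortionProfile (-x) = -distortionProfile x := by
  rw [distortionProfile, distortionProfile, neg_sq, neg_mul, Real.arctan_neg]

lemma abs_distortionProfile_lt (x : ℝ) : |distortionProfile x| < π / 2 :=
  abs_lt.2 (Real.arctan_mem_Ioo _)

lemma distortionProfile_nonneg {x : ℝ} (hx : 0 ≤ x) : 0 ≤ distortionProfile x :=
  Real.arctan_nonneg.2 (mul_nonneg hx (by positivity))

lemma mul_distortionProfile_nonneg (x : ℝ) : 0 ≤ x * distortionProfile x := by
  rcases le_total 0 x with h | h
  · exact mul_nonneg h (distortionProfile_nonneg h)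
  · simpa [distortionProfile_neg] using
      mul_nonneg (neg_nonneg.2 h) (distortionProfile_nonneg (neg_nonneg.2 h))

lemma pi_div_four_le_distortionProfile {x : ℝ} (hx : 2 ≤ x) :
    π / 4 ≤ distortionProfile x := by
  have hpos : 0 < 1 + x ^ 2 := by positivity
  have hroot : (1 + x ^ 2) ^ (4 : ℝ)⁻¹ ≤ x := by
    rw [Real.rpow_inv_le_iff_of_pos hpos.le (by linarith) (by norm_num)]
    norm_cast
    nlinarith [mul_le_mul hx hx (by norm_num) (by linarith : (0:ℝ) ≤ x)]
  rw [← Real.arctan_one, distortionProfile, Real.arctan_le_arctan_iff, Real.rpow_neg hpos.le,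
    ← div_eq_mul_inv, one_le_div (by positivity)]
  norm_num at hroot ⊢
  exact hroot

lemma pi_div_four_le_abs_distortionProfile {x : ℝ} (hx : 2 ≤ |x|) :
    π / 4 ≤ |distortionProfile x| := by
  rcases abs_cases x with ⟨h, -⟩ | ⟨h, -⟩ <;> rw [h] at hx
  · exact (pi_div_four_le_distortionProfile hx).trans (le_abs_self _)
  · simpa [distortionProfile_neg] using
      (pi_div_four_le_distortionProfile hx).trans (le_abs_self _)

/-- The exterior complex distortion `ξ_ρ` of Definition 3.3, with cut-off point `x₀`. -/
structure IsExteriorDistortion (η x₀ : ℝ) (ξ : ℝ → ℂ) : Prop where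
  eq_of_le : ∀ x, x₀ ≤ x → ξ x = x - I * η * distortionProfile x
  eq_of_le_sub : ∀ x, x ≤ x₀ - η → ξ x = x
  re_eq : ∀ x ∈ Set.Icc (x₀ - η) x₀, (ξ x).re = x
  monotoneOn_im : MonotoneOn (fun x => (ξ x).im) (Set.Icc (x₀ - η) x₀)

namespace IsExteriorDistortion

variable {η x₀ θ ρ : ℝ} {k : ℕ} {ξ : ℝ → ℂ} (hξ : IsExteriorDistortion η x₀ ξ)
include hξ

lemma re_eq_of_le {x : ℝ} (hx : x₀ - η ≤ x) : (ξ x).re = x := by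
  rcases le_or_gt x₀ x with h | h
  · simp [hξ.eq_of_le x h]
  · exact hξ.re_eq x ⟨hx, h.le⟩

lemma im_eq_of_le {x : ℝ} (hx : x₀ ≤ x) : (ξ x).im = -(η * distortionProfile x) := by
  simp [hξ.eq_of_le x hx]

lemma re_mul_im_nonpos_of_le (hη : 0 ≤ η) {x : ℝ} (hx : x₀ ≤ x) :
    (ξ x).re * (ξ x).im ≤ 0 := by
  rw [hξ.re_eq_of_le (by linarith), hξ.im_eq_of_le hx]
  nlinarith [mul_distortionProfile_nonneg x]

lemma abs_im_le_of_le (hη : η ∈ Set.Icc 0 1) {x : ℝ} (hx : x₀ ≤ x) : |(ξ x).im| ≤ π / 2 := by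
  rw [hξ.im_eq_of_le hx, abs_neg, abs_mul, abs_of_nonneg hη.1]
  nlinarith [hη.2, abs_nonneg (distortionProfile x), abs_distortionProfile_lt x]

lemma mul_pi_div_four_le_abs_im (hη : 0 ≤ η) {x : ℝ} (hx : x₀ ≤ x) (hx2 : 2 ≤ |x|) :
    η * (π / 4) ≤ |(ξ x).im| := by
  rw [hξ.im_eq_of_le hx, abs_neg, abs_mul, abs_of_nonneg hη]
  gcongr
  exact pi_div_four_le_abs_distortionProfile hx2

lemma im_mem_Icc_of_nonpos (hη : η ∈ Set.Icc 0 1) {x : ℝ} (hx : x₀ - η ≤ x) (hx0 : x ≤ 0) :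
    (ξ x).im ∈ Set.Icc 0 (π / 2) := by
  rcases le_or_gt x₀ x with hdist | hcut
  · refine ⟨?_, (le_abs_self _).trans (hξ.abs_im_le_of_le hη hdist)⟩
    rw [hξ.im_eq_of_le hdist, ← mul_neg, ← distortionProfile_neg]
    exact mul_nonneg hη.1 (distortionProfile_nonneg (by linarith))
  have hleft : x₀ - η ∈ Set.Icc (x₀ - η) x₀ := ⟨le_rfl, by linarith [hη.1]⟩
  have hright : x₀ ∈ Set.Icc (x₀ - η) x₀ := ⟨by linarith [hη.1], le_rfl⟩
  have him_left : (ξ (x₀ - η)).im = 0 := by simp [hξ.eq_of_le_sub _ le_rfl]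
  exact ⟨him_left ▸ hξ.monotoneOn_im hleft ⟨hx, hcut.le⟩ hx,
    (hξ.monotoneOn_im ⟨hx, hcut.le⟩ hright hcut.le).trans
      ((le_abs_self _).trans (hξ.abs_im_le_of_le hη le_rfl))⟩

lemma mul_le_re_distortedPotential_of_nonneg (hk : 1 ≤ k) (hη : η ∈ Set.Icc 0 1)
    (hx₀ : x₀ ≤ 0) (hρ : 0 ≤ ρ) (hsin : 0 ≤ Real.sin θ) (hcos : 1 / 2 ≤ Real.cos θ) {x : ℝ}
    (hx : 2 * k + 1 ≤ x) :
    η * x / 2 ≤ (distortedPotential θ ρ (2 * k + 1) (ξ x)).re := by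
  have hk' : (1 : ℝ) ≤ k := by exact_mod_cast hk
  have hx0 : 0 < x := by linarith
  have hdist : x₀ ≤ x := by linarith
  have hre : (ξ x).re = x := hξ.re_eq_of_le (by linarith [hη.1])
  have hsign := hξ.re_mul_im_nonpos_of_le hη.1 hdist
  have him0 : (ξ x).im ≤ 0 := nonpos_of_mul_nonpos_right (by rwa [hre] at hsign) hx0
  have him := hξ.abs_im_le_of_le hη hdist
  have hpow : ρ * ((ξ x) ^ (2 * k + 1)).im ≤ |(ξ x).re * (ξ x).im| / 4 := by
    refine (mul_nonpos_of_nonneg_of_nonpos hρ (Complex.im_pow_nonpos _ ?_ him0 ?_)).trans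
      (by positivity)
    · rwa [hre]
    · rw [abs_of_nonpos him0] at him
      rw [hre]; push_cast; nlinarith [Real.pi_pos]
  have h := mul_abs_le_re_distortedPotential hsin hcos hsign hpow hη.1
    (by rw [hre, abs_of_pos hx0]; linarith)
    (hξ.mul_pi_div_four_le_abs_im hη.1 hdist (by rw [abs_of_pos hx0]; linarith)) him
  rwa [hre, abs_of_pos hx0] at h

lemma min_le_re_distortedPotential_of_neg (hk : 1 ≤ k) (hη : η ∈ Set.Icc 0 1)
    (hx₀ : x₀ ≤ -3) (hρ : 0 ≤ ρ) (hsin : 0 ≤ Real.sin θ) (hcos : 1 / 2 ≤ Real.cos θ)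
    (hsmall : (2 * k + 1) * 2 ^ k * ρ * (-2 * x₀) ^ (2 * k - 1) ≤ 1 / 4) {x : ℝ}
    (hx : 2 ≤ -x) :
    min (η * -x / 2) (Real.sin θ * x₀ ^ 2 / 2) ≤
      (distortedPotential θ ρ (2 * k + 1) (ξ x)).re := by
  rcases le_or_gt x (x₀ - η) with hfar | hnear
  · rw [hξ.eq_of_le_sub x hfar]
    refine (min_le_right _ _).trans
      (sin_mul_sq_div_two_le_re_distortedPotential hsin hcos ?_ ?_ ?_ ?_)
    · simp
    · simp [← ofReal_pow]
    · simp only [ofReal_re]; nlinarith [hη.1]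
    · rw [ofReal_im, zero_pow two_ne_zero]; positivity
  have hre : (ξ x).re = x := hξ.re_eq_of_le hnear.le
  have habs_re : |(ξ x).re| = -x := by rw [hre, abs_of_neg (by linarith)]
  have him := hξ.im_mem_Icc_of_nonpos hη hnear.le (by linarith)
  have hsign : (ξ x).re * (ξ x).im ≤ 0 := by rw [hre]; nlinarith [him.1]
  have hpow : ρ * ((ξ x) ^ (2 * k + 1)).im ≤ |(ξ x).re * (ξ x).im| / 4 := by
    refine (mul_le_mul_of_nonneg_left (le_abs_self _) hρ).trans
      (mul_abs_im_pow_le hk hρ ?_ ?_ hsmall) <;> rw [habs_re]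
    · rw [abs_of_nonneg him.1]; linarith [him.2, Real.pi_le_four]
    · linarith [hη.2]
  rcases le_or_gt x₀ x with hdist | hcut
  · rw [← habs_re]
    refine (min_le_left _ _).trans (mul_abs_le_re_distortedPotential hsin hcos hsign hpow hη.1
      (by linarith) ?_ (hξ.abs_im_le_of_le hη hdist))
    exact hξ.mul_pi_div_four_le_abs_im hη.1 hdist (by rw [abs_of_neg (by linarith)]; linarith)
  · refine (min_le_right _ _).trans (sin_mul_sq_div_two_le_re_distortedPotential hsin hcos
      hsign hpow (by rw [hre]; nlinarith) ?_)
    nlinarith [him.1, him.2, Real.pi_le_four]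

lemma le_re_distortedPotential {c : ℝ} (hk : 1 ≤ k) (hη : η ∈ Set.Icc 0 1) (hx₀ : x₀ ≤ -3)
    (hρ : 0 ≤ ρ) (hsin : 0 ≤ Real.sin θ) (hcos : 1 / 2 ≤ Real.cos θ)
    (hsmall : (2 * k + 1) * 2 ^ k * ρ * (-2 * x₀) ^ (2 * k - 1) ≤ 1 / 4)
    (hcx₀ : c ≤ Real.sin θ * x₀ ^ 2 / 2) {x : ℝ} (hxk : 2 * k + 1 ≤ |x|)
    (hxc : c ≤ η * |x| / 2) :
    c ≤ (distortedPotential θ ρ (2 * k + 1) (ξ x)).re := by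
  have hk' : (1 : ℝ) ≤ k := by exact_mod_cast hk
  rcases le_total 0 x with hx | hx
  · rw [abs_of_nonneg hx] at hxk hxc
    exact hxc.trans
      (hξ.mul_le_re_distortedPotential_of_nonneg hk hη (by linarith) hρ hsin hcos hxk)
  · rw [abs_of_nonpos hx] at hxk hxc
    exact (le_min hxc hcx₀).trans
      (hξ.min_le_re_distortedPotential_of_neg hk hη hx₀ hρ hsin hcos hsmall (by linarith))

end IsExteriorDistortion

namespace Real

lemma mul_le_sin_arcsin_mul {y r : ℝ} (hy : 0 ≤ y) (hy1 : y ≤ 1) (hr : 0 ≤ r) (hr1 : r ≤ 1) :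
    2 / π * r * y ≤ sin (arcsin y * r) := by
  have harcsin : y ≤ arcsin y := (sin_arcsin (by linarith) hy1).symm.trans_le
    (sin_le (arcsin_nonneg.2 hy))
  calc 2 / π * r * y ≤ 2 / π * (arcsin y * r) := by
        rw [mul_assoc, mul_comm r]; gcongr
    _ ≤ sin (arcsin y * r) := mul_le_sin (mul_nonneg (arcsin_nonneg.2 hy) hr)
        ((mul_le_of_le_one_right (arcsin_nonneg.2 hy) hr1).trans (arcsin_le_pi_div_two y))

lemma half_le_cos_arcsin_mul {y r : ℝ} (hy : 0 ≤ y) (hy2 : y ≤ 1 / 2) (hr : 0 ≤ r)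
    (hr1 : r ≤ 1) : 1 / 2 ≤ cos (arcsin y * r) := by
  have h0 : 0 ≤ arcsin y := arcsin_nonneg.2 hy
  calc 1 / 2 ≤ √(1 - y ^ 2) := by
        rw [le_sqrt (by norm_num) (by nlinarith)]; nlinarith
    _ = cos (arcsin y) := (cos_arcsin y).symm
    _ ≤ cos (arcsin y * r) := cos_le_cos_of_nonneg_of_le_pi (by positivity)
        ((arcsin_le_pi_div_two y).trans (by linarith [pi_pos]))
        (mul_le_of_le_one_right h0 hr1)

end Real

/-- The constant `a_k` of the cut-off point `x₀ = -a_k ρ^{-1/(2k-1)}`. -/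
noncomputable def cutoffConstant (k : ℕ) : ℝ := 1 / (2 ^ (k + 3) * (2 * k + 1))

lemma cutoffConstant_pos (k : ℕ) : 0 < cutoffConstant k := by
  unfold cutoffConstant; positivity

lemma mul_two_mul_cutoffConstant_pow_le {k : ℕ} (hk : 1 ≤ k) :
    (2 * k + 1) * 2 ^ k * (2 * cutoffConstant k) ^ (2 * k - 1) ≤ 1 / 4 := by
  have h2a : 2 * cutoffConstant k ≤ 1 := by
    unfold cutoffConstant
    rw [← mul_div_assoc, mul_one, div_le_one (by positivity)]
    nlinarith [pow_le_pow_right₀ (by norm_num : (1 : ℝ) ≤ 2) (by omega : 1 ≤ k + 3),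
      (by positivity : (0 : ℝ) ≤ k)]
  calc (2 * k + 1) * 2 ^ k * (2 * cutoffConstant k) ^ (2 * k - 1)
      ≤ (2 * k + 1) * 2 ^ k * (2 * cutoffConstant k) := by
        gcongr; exact pow_le_of_le_one (by linarith [cutoffConstant_pos k]) h2a (by omega)
    _ = 1 / 4 := by unfold cutoffConstant; rw [pow_add]; field_simp; norm_num

lemma exists_root_of_lt_rpow {k : ℕ} (hk : 1 ≤ k) {ρ m : ℝ} (hρ : 0 < ρ) (hm : 0 ≤ m)
    (hρm : ρ < m ^ (2 * (k : ℝ) - 1)) :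
    ∃ t, 0 < t ∧ t < m ∧ t ^ (2 * k - 1) = ρ ∧ ρ ^ (2 / (2 * (k : ℝ) - 1)) = t ^ 2 ∧
      ρ ^ (-(1 : ℝ) / (2 * (k : ℝ) - 1)) = t⁻¹ := by
  have hk' : (1 : ℝ) ≤ k := by exact_mod_cast hk
  refine ⟨ρ ^ (2 * (k : ℝ) - 1)⁻¹, by positivity,
    (Real.rpow_inv_lt_iff_of_pos hρ.le hm (by linarith)).2 hρm, ?_, ?_, ?_⟩
  · have hD : 2 * (k : ℝ) - 1 = ((2 * k - 1 : ℕ) : ℝ) := by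
      rw [Nat.cast_sub (by omega)]; push_cast; ring
    rw [hD, Real.rpow_inv_natCast_pow hρ.le (by omega)]
  · rw [← Real.rpow_mul_natCast hρ.le, div_eq_mul_inv, mul_comm]; norm_num
  · rw [neg_div, one_div, Real.rpow_neg hρ.le]

lemma IsExteriorDistortion.div_le_re_distortedPotential {k : ℕ} (hk : 1 ≤ k)
    {η R ρ t x : ℝ} {ξ : ℝ → ℂ} (hη : η ∈ Set.Icc 0 1) (hR : 0 < R) (ht : 0 < t)
    (htR : t < √(R / 2)) (hta : t < cutoffConstant k / 3) (hρt : t ^ (2 * k - 1) = ρ)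
    (hξ : IsExteriorDistortion η (-cutoffConstant k * t⁻¹) ξ) (hxk : 2 * k + 1 ≤ |x|)
    (hxc : (2 * k - 1) / (2 * k + 1) * cutoffConstant k ^ 2 / π / R ≤ η * |x| / 2) :
    (2 * k - 1) / (2 * k + 1) * cutoffConstant k ^ 2 / π / R ≤
      (distortedPotential (Real.arcsin (t ^ 2 / R) * (2 * k - 1) / (2 * k + 1)) ρ
        (2 * k + 1) (ξ x)).re := by
  set a := cutoffConstant k
  have ha := cutoffConstant_pos k
  have hk' : (1 : ℝ) ≤ k := by exact_mod_cast hk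
  have hy : t ^ 2 / R ≤ 1 / 2 := by
    rw [div_le_iff₀ hR]; nlinarith [Real.sq_sqrt (by linarith : 0 ≤ R / 2)]
  have hr : (2 * k - 1) / (2 * k + 1) ≤ (1 : ℝ) := by rw [div_le_one (by linarith)]; linarith
  have hr0 : 0 ≤ (2 * k - 1) / (2 * k + 1 : ℝ) := div_nonneg (by linarith) (by linarith)
  have hsin := Real.mul_le_sin_arcsin_mul (y := t ^ 2 / R) (by positivity) (by linarith) hr0 hr
  have hcos := Real.half_le_cos_arcsin_mul (y := t ^ 2 / R) (by positivity) hy hr0 hr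
  rw [← mul_div_assoc (Real.arcsin _)] at hsin hcos
  refine hξ.le_re_distortedPotential hk hη ?_ (hρt ▸ by positivity)
    (le_trans (by positivity) hsin) hcos ?_ ?_ hxk hxc
  · rw [neg_mul, neg_le_neg_iff, ← div_eq_mul_inv, le_div_iff₀ ht]; linarith
  · have h2a : t * (-2 * (-a * t⁻¹)) = 2 * a := by field_simp
    calc _ = (2 * k + 1) * 2 ^ k * (t * (-2 * (-a * t⁻¹))) ^ (2 * k - 1) := by
          rw [← hρt, mul_pow t]; ring
      _ ≤ 1 / 4 := h2a ▸ mul_two_mul_cutoffConstant_pow_le hk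
  · calc _ = 2 / π * ((2 * k - 1) / (2 * k + 1)) * (t ^ 2 / R) * (-a * t⁻¹) ^ 2 / 2 := by
          field_simp
      _ ≤ _ := by gcongr

/-- **Lemma 3.5**: lower bound `Re V_ρ(x) ≥ c₁/R + c₂` outside a compact set, for the
distorted potential `V_ρ(x) = e^{i(π/2 − ε(2k−1)/(2k+1))}ξ(x)² + iρξ(x)^{2k+1}`, where
`ξ = ξ_ρ` is the exterior complex distortion of Definition 3.3 with cut-off point
`x₀ = −a·ρ^{−1/(2k−1)}`, `q = (2k−1)/2` and `sin ε = ρ^{1/q}/R`. -/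
theorem lemma_3_5_potential_lower_bound
    (k : ℕ) (hk : 1 ≤ k) (η : ℝ) (hη : η ∈ Set.Ioo (0 : ℝ) 1) :
    ∃ a > (0:ℝ), ∃ c₁ > (0:ℝ), ∃ c₂ : ℝ, ∀ R > (0:ℝ), ∃ ρ₀ > (0:ℝ), ∃ n₀ : ℕ, 1 ≤ n₀ ∧
      ∀ ρ : ℝ, 0 < ρ → ρ < ρ₀ →
        ρ ^ (2 / (2 * (k : ℝ) - 1)) < R ∧
        ∀ ξ : ℝ → ℂ,
          (∀ x : ℝ, -a * ρ ^ (-(1 : ℝ) / (2 * (k : ℝ) - 1)) ≤ x →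
            ξ x = (x : ℂ) - Complex.I * (η : ℂ) *
              ((Real.arctan (x * (1 + x ^ 2) ^ (-(1 / 4 : ℝ))) : ℝ) : ℂ)) →
          (∀ x : ℝ, x ≤ -a * ρ ^ (-(1 : ℝ) / (2 * (k : ℝ) - 1)) - η → ξ x = (x : ℂ)) →
          (∀ x ∈ Set.Icc (-a * ρ ^ (-(1 : ℝ) / (2 * (k : ℝ) - 1)) - η)
              (-a * ρ ^ (-(1 : ℝ) / (2 * (k : ℝ) - 1))), (ξ x).re = x) →
          MonotoneOn (fun x => (ξ x).im)
            (Set.Icc (-a * ρ ^ (-(1 : ℝ) / (2 * (k : ℝ) - 1)) - η)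
              (-a * ρ ^ (-(1 : ℝ) / (2 * (k : ℝ) - 1)))) →
          ∀ x : ℝ, (n₀ : ℝ) ≤ |x| →
            c₁ / R + c₂ ≤
              (Complex.exp (Complex.I * ((π / 2 : ℝ) -
                    Real.arcsin (ρ ^ (2 / (2 * (k : ℝ) - 1)) / R)
                      * (2 * (k : ℝ) - 1) / (2 * (k : ℝ) + 1) : ℝ))
                  * (ξ x) ^ 2
                + Complex.I * (ρ : ℂ) * (ξ x) ^ (2 * k + 1)).re := by
  have hk' : (1 : ℝ) ≤ k := by exact_mod_cast hk
  obtain ⟨hη0, hη1⟩ := hη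
  set a := cutoffConstant k
  have ha : 0 < a := cutoffConstant_pos k
  set c₁ := (2 * k - 1) / (2 * k + 1) * a ^ 2 / π
  have hc₁ : 0 < c₁ := div_pos (mul_pos (div_pos (by linarith) (by linarith)) (by positivity))
    Real.pi_pos
  refine ⟨a, ha, c₁, hc₁, 0, fun R hR => ?_⟩
  set m := min (√(R / 2)) (a / 3)
  refine ⟨m ^ (2 * (k : ℝ) - 1), by positivity, ⌈2 * k + 1 + 2 * c₁ / (η * R)⌉₊,
    Nat.one_le_ceil_iff.2 (by positivity), fun ρ hρ hρm => ?_⟩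
  obtain ⟨t, ht, htm, hρt, hρ2, hρ1⟩ := exists_root_of_lt_rpow hk hρ (by positivity) hρm
  have htR : t < √(R / 2) := htm.trans_le (min_le_left _ _)
  rw [hρ2, hρ1]
  refine ⟨by nlinarith [(Real.lt_sqrt ht.le).1 htR], fun ξ h₁ h₂ h₃ h₄ x hx => ?_⟩
  have hx' := (Nat.le_ceil _).trans hx
  have hcηR : 0 < 2 * c₁ / (η * R) := by positivity
  have hxc : c₁ / R ≤ η * |x| / 2 := by
    have hcx : 2 * c₁ / (η * R) ≤ |x| := by linarith
    rw [div_le_iff₀ (by positivity)] at hcx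
    rw [div_le_iff₀ hR]; linarith
  rw [add_zero]
  exact IsExteriorDistortion.div_le_re_distortedPotential hk ⟨hη0.le, hη1.le⟩ hR ht htR
    (htm.trans_le (min_le_right _ _)) hρt ⟨h₁, h₂, h₃, h₄⟩ (by linarith) hxc
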